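/- Let d ≥ 1, let V ⊆ ℝᵈ be a bounded open neighborhood of 0, and let z : ℝᵈ → ℝ be twice continuously differentiable on a neighborhood of the closure of V with z(0) = 0. Assume c := inf { z(x)/‖x‖² : x ∈ V, x ≠ 0 } > 0, and let Q(ξ) := ½ D²z(0)(ξ, ξ) denote the second-order Taylor form of z at 0. Let v : ℝᵈ × [0,1] → ℝ be continuous. Then Q is a positive definite quadratic form (indeed Q(ξ) ≥ c‖ξ‖²), and lim_{t→0⁺} ∫_V (2πt)^{−d/2} e^{−z(u)/(2t)} v(u, t) du = v(0,0) · (2π)^{−d/2} ∫_{ℝᵈ} e^{−Q(ξ)/2} dξ. -/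

import Mathlib

/-!
On `V` we have `z ≥ c‖x‖²`, so `0` is a local minimum and `Dz(0) = 0`; by l'Hôpital's rule along
rays the quotients `z(sξ)/s²` tend to `Q ξ`, which is therefore at least `c‖ξ‖²`. For the limit,
substitute `u = √t ξ`: the Jacobian `t^{d/2}` cancels the prefactor `t^{-d/2}`, the new integrand
tends pointwise to `e^{-Q(ξ)/2} v(0,0)` and is dominated by `M e^{-c‖ξ‖²/2}` with `M` a bound of
`|v|` on the compact set `closure V × [0,1]`, so dominated convergence concludes.
-/

open Set Filter MeasureTheory Real Topology Module

theorem tendsto_div_sq_nhdsGT_of_hasDerivAt {g g' : ℝ → ℝ} {a : ℝ}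
    (hg : ∀ᶠ s in 𝓝 0, HasDerivAt g (g' s) s) (hg0 : g 0 = 0) (hg'0 : g' 0 = 0)
    (hg' : HasDerivAt g' a 0) :
    Tendsto (fun s => g s / s ^ 2) (𝓝[>] 0) (𝓝 (a / 2)) := by
  have hslope : Tendsto (fun s => g' s / s) (𝓝[>] 0) (𝓝 a) := by
    simpa [hg'0, div_eq_inv_mul] using hg'.tendsto_slope_zero_right
  refine HasDerivAt.lhopital_zero_nhdsGT (g' := fun s => 2 * s) (nhdsWithin_le_nhds hg)
    (Eventually.of_forall fun s => by simpa using hasDerivAt_pow 2 s)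
    (eventually_nhdsWithin_of_forall fun s (hs : 0 < s) => by positivity) ?_ ?_ ?_
  · simpa [hg0] using hg.self_of_nhds.continuousAt.tendsto.mono_left nhdsWithin_le_nhds
  · simpa using ((continuous_pow 2).tendsto (0 : ℝ)).mono_left nhdsWithin_le_nhds
  · refine (hslope.div_const 2).congr fun s => ?_
    ring

theorem sInf_div_norm_sq_mul_le {E : Type*} [NormedAddCommGroup E] {V : Set E} {z : E → ℝ}
    (hz0 : z 0 = 0)
    (h : sInf {r : ℝ | ∃ x ∈ V, x ≠ 0 ∧ r = z x / ‖x‖ ^ 2} ≠ 0) {x : E} (hx : x ∈ V) :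
    sInf {r : ℝ | ∃ x ∈ V, x ≠ 0 ∧ r = z x / ‖x‖ ^ 2} * ‖x‖ ^ 2 ≤ z x := by
  rcases eq_or_ne x 0 with rfl | hx0
  · simp [hz0]
  -- `sInf` of a set that is not bounded below is `0`
  have hbdd : BddBelow {r : ℝ | ∃ x ∈ V, x ≠ 0 ∧ r = z x / ‖x‖ ^ 2} := by
    by_contra hnot
    exact h (Real.sInf_of_not_bddBelow hnot)
  rw [← le_div_iff₀ (by positivity)]
  exact csInf_le hbdd ⟨x, hx, hx0, rfl⟩

section NormedSpace

variable {E : Type*} [NormedAddCommGroup E] [NormedSpace ℝ E]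

theorem tendsto_comp_smul_div_sq_of_contDiffAt {z : E → ℝ} (hz : ContDiffAt ℝ 2 z 0)
    (hz0 : z 0 = 0) (hdz : fderiv ℝ z 0 = 0) (ξ : E) :
    Tendsto (fun s : ℝ => z (s • ξ) / s ^ 2) (𝓝[>] 0)
      (𝓝 (iteratedFDeriv ℝ 2 z 0 ![ξ, ξ] / 2)) := by
  have hline : ∀ s : ℝ, HasDerivAt (fun r : ℝ => r • ξ) ξ s := fun s => by
    simpa using (hasDerivAt_id s).smul_const ξ
  have hline0 : Tendsto (fun s : ℝ => s • ξ) (𝓝 0) (𝓝 0) :=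
    (continuous_id.smul continuous_const).tendsto' 0 0 (zero_smul ℝ ξ)
  have hg : ∀ᶠ s in 𝓝 (0 : ℝ),
      HasDerivAt (fun s : ℝ => z (s • ξ)) (fderiv ℝ z (s • ξ) ξ) s := by
    filter_upwards [hline0.eventually (hz.eventually (by simp))] with s hs
    exact (hs.differentiableAt (by norm_num)).hasFDerivAt.comp_hasDerivAt s (hline s)
  have hB : HasDerivAt (fun s : ℝ => fderiv ℝ z (s • ξ) ξ)
      (fderiv ℝ (fderiv ℝ z) 0 ξ ξ) 0 := by
    have hdiff : HasFDerivAt (fderiv ℝ z) (fderiv ℝ (fderiv ℝ z) 0) ((0 : ℝ) • ξ) := by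
      have hz' : ContDiffAt ℝ 1 (fderiv ℝ z) 0 := hz.fderiv_right (by norm_num)
      rw [zero_smul]
      exact (hz'.differentiableAt (by norm_num)).hasFDerivAt
    have hcomp : HasDerivAt (fun s : ℝ => fderiv ℝ z (s • ξ)) (fderiv ℝ (fderiv ℝ z) 0 ξ) 0 :=
      hdiff.comp_hasDerivAt 0 (hline 0)
    simpa using hcomp.clm_apply (hasDerivAt_const (0 : ℝ) ξ)
  rw [iteratedFDeriv_two_apply]
  exact tendsto_div_sq_nhdsGT_of_hasDerivAt hg (by simp [hz0]) (by simp [hdz]) hB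

theorem mul_norm_sq_le_of_tendsto_comp_smul_div_sq {z : E → ℝ} {c q : ℝ} {ξ : E}
    (hz : ∀ᶠ x in 𝓝 0, c * ‖x‖ ^ 2 ≤ z x)
    (hlim : Tendsto (fun s : ℝ => z (s • ξ) / s ^ 2) (𝓝[>] 0) (𝓝 q)) :
    c * ‖ξ‖ ^ 2 ≤ q := by
  have hline : Tendsto (fun s : ℝ => s • ξ) (𝓝[>] 0) (𝓝 0) :=
    ((continuous_id.smul continuous_const).tendsto' 0 0 (zero_smul ℝ ξ)).mono_left
      nhdsWithin_le_nhds
  refine ge_of_tendsto hlim ?_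
  filter_upwards [hline.eventually hz, self_mem_nhdsWithin] with s hs (hs0 : 0 < s)
  rw [le_div_iff₀ (by positivity)]
  calc c * ‖ξ‖ ^ 2 * s ^ 2 = c * ‖s • ξ‖ ^ 2 := by
        rw [norm_smul, mul_pow, Real.norm_eq_abs, sq_abs]; ring
    _ ≤ z (s • ξ) := hs

noncomputable def rescaledLaplaceIntegrand (V : Set E) (z : E → ℝ) (v : E → ℝ → ℝ) (t : ℝ)
    (ξ : E) : ℝ :=
  V.indicator (fun u => exp (-z u / (2 * t)) * v u t) (√t • ξ)

variable {V : Set E} {z : E → ℝ} {v : E → ℝ → ℝ}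

theorem norm_rescaledLaplaceIntegrand_le {c M t : ℝ} (hzV : ∀ x ∈ V, c * ‖x‖ ^ 2 ≤ z x)
    (hvM : ∀ x ∈ V, ‖v x t‖ ≤ M) (hM : 0 ≤ M) (ht : 0 < t) (ξ : E) :
    ‖rescaledLaplaceIntegrand V z v t ξ‖ ≤ M * exp (-(c / 2) * ‖ξ‖ ^ 2) := by
  unfold rescaledLaplaceIntegrand
  by_cases hξ : √t • ξ ∈ V
  · rw [indicator_of_mem hξ, norm_mul, Real.norm_of_nonneg (exp_pos _).le, mul_comm]
    have hz : c * (t * ‖ξ‖ ^ 2) ≤ z (√t • ξ) := by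
      simpa [norm_smul, mul_pow, sq_sqrt ht.le] using hzV _ hξ
    gcongr
    · exact hvM _ hξ
    · rw [div_le_iff₀ (by positivity)]
      linarith
  · rw [indicator_of_notMem hξ, norm_zero]
    positivity

theorem tendsto_rescaledLaplaceIntegrand {q : ℝ} {ξ : E} (hV : V ∈ 𝓝 0)
    (hlim : Tendsto (fun s : ℝ => z (s • ξ) / s ^ 2) (𝓝[>] 0) (𝓝 q))
    (hv : ContinuousWithinAt (fun p : E × ℝ => v p.1 p.2) (univ ×ˢ Icc 0 1) (0, 0)) :
    Tendsto (fun t => rescaledLaplaceIntegrand V z v t ξ) (𝓝[>] 0)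
      (𝓝 (exp (-q / 2) * v 0 0)) := by
  have hsqrt : Tendsto (fun t : ℝ => √t) (𝓝[>] 0) (𝓝[>] 0) :=
    tendsto_nhdsWithin_iff.2 ⟨(continuous_sqrt.tendsto' 0 0 sqrt_zero).mono_left
      nhdsWithin_le_nhds, eventually_nhdsWithin_of_forall fun t (ht : 0 < t) => sqrt_pos.2 ht⟩
  have hline : Tendsto (fun t : ℝ => √t • ξ) (𝓝[>] 0) (𝓝 0) := by
    simpa using (hsqrt.mono_right nhdsWithin_le_nhds).smul_const ξ
  have hpath : Tendsto (fun t : ℝ => (√t • ξ, t)) (𝓝[>] 0) (𝓝[univ ×ˢ Icc 0 1] (0, 0)) := by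
    refine tendsto_nhdsWithin_iff.2
      ⟨hline.prodMk_nhds (tendsto_id.mono_left nhdsWithin_le_nhds), ?_⟩
    filter_upwards [Ioc_mem_nhdsGT zero_lt_one] with t ht
    exact ⟨mem_univ _, ht.1.le, ht.2⟩
  have hexp : Tendsto (fun t => exp (-z (√t • ξ) / (2 * t))) (𝓝[>] 0) (𝓝 (exp (-q / 2))) := by
    refine (continuous_exp.tendsto _).comp ((((hlim.comp hsqrt).neg).div_const 2).congr' ?_)
    filter_upwards [self_mem_nhdsWithin] with t (ht : 0 < t)
    simp only [Function.comp_apply, sq_sqrt ht.le]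
    ring
  refine (hexp.mul (hv.tendsto.comp hpath)).congr' ?_
  filter_upwards [hline.eventually hV] with t ht
  simp [rescaledLaplaceIntegrand, indicator_of_mem ht]

theorem aestronglyMeasurable_rescaledLaplaceIntegrand [MeasurableSpace E] [BorelSpace E]
    {μ : Measure E} {t : ℝ} (hV : IsOpen V) (hz : ContinuousOn z V)
    (hv : ContinuousOn (fun u => v u t) V) :
    AEStronglyMeasurable (rescaledLaplaceIntegrand V z v t) μ := by
  have hscale : Continuous fun ξ : E => √t • ξ := continuous_const_smul _
  have hW : IsOpen ((√t • ·) ⁻¹' V) := hV.preimage hscale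
  have hcont : ContinuousOn (fun u => exp (-z u / (2 * t)) * v u t) V := by
    fun_prop
  have hind : rescaledLaplaceIntegrand V z v t
      = ((√t • ·) ⁻¹' V).indicator ((fun u => exp (-z u / (2 * t)) * v u t) ∘ (√t • ·)) :=
    funext fun ξ => (indicator_comp_right _).symm
  rw [hind]
  refine (aestronglyMeasurable_indicator_iff hW.measurableSet).2 ?_
  exact (hcont.comp hscale.continuousOn fun _ h => h).aestronglyMeasurable hW.measurableSet

end NormedSpace

section HaarMeasure

variable {E : Type*} [NormedAddCommGroup E] [NormedSpace ℝ E] [FiniteDimensional ℝ E]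
  [MeasurableSpace E] [BorelSpace E] (μ : Measure E) [μ.IsAddHaarMeasure]

theorem integral_comp_sqrt_smul {F : Type*} [NormedAddCommGroup F] [NormedSpace ℝ F]
    (f : E → F) {t : ℝ} (ht : 0 ≤ t) :
    ∫ ξ, f (√t • ξ) ∂μ = t ^ (-(finrank ℝ E : ℝ) / 2) • ∫ u, f u ∂μ := by
  rw [Measure.integral_comp_smul_of_nonneg μ f √t (hR := sqrt_nonneg t), sqrt_eq_rpow,
    ← rpow_natCast, ← rpow_mul ht, neg_div, rpow_neg ht]
  ring_nf

theorem setIntegral_laplace_eq_integral_rescaledLaplaceIntegrand {V : Set E} (hV : MeasurableSet V)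
    (z : E → ℝ) (v : E → ℝ → ℝ) {t : ℝ} (ht : 0 < t) :
    ∫ u in V, (2 * π * t) ^ (-(finrank ℝ E : ℝ) / 2) * exp (-z u / (2 * t)) * v u t ∂μ
      = (2 * π) ^ (-(finrank ℝ E : ℝ) / 2) * ∫ ξ, rescaledLaplaceIntegrand V z v t ξ ∂μ := by
  simp only [rescaledLaplaceIntegrand]
  rw [integral_comp_sqrt_smul μ _ ht.le, integral_indicator hV, smul_eq_mul,
    ← integral_const_mul, ← integral_const_mul]
  congr 1 with u
  rw [mul_rpow (by positivity) ht.le]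
  ring

end HaarMeasure

section InnerProductSpace

variable {E : Type*} [NormedAddCommGroup E] [InnerProductSpace ℝ E] [FiniteDimensional ℝ E]
  [MeasurableSpace E] [BorelSpace E]

theorem integrable_exp_neg_mul_sq_norm {b : ℝ} (hb : 0 < b) :
    Integrable fun ξ : E => exp (-b * ‖ξ‖ ^ 2) :=
  Integrable.of_integral_ne_zero <| by
    rw [GaussianFourier.integral_rexp_neg_mul_sq_norm hb]
    positivity

theorem tendsto_integral_rescaledLaplaceIntegrand {V : Set E} {z Q : E → ℝ} {v : E → ℝ → ℝ}
    {c M : ℝ} (hV : IsOpen V) (hV0 : 0 ∈ V) (hz : ContinuousOn z V) (hc : 0 < c)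
    (hzV : ∀ x ∈ V, c * ‖x‖ ^ 2 ≤ z x)
    (hv : ContinuousOn (fun p : E × ℝ => v p.1 p.2) (univ ×ˢ Icc 0 1))
    (hvM : ∀ x ∈ V, ∀ t ∈ Icc (0 : ℝ) 1, ‖v x t‖ ≤ M)
    (hlim : ∀ ξ, Tendsto (fun s : ℝ => z (s • ξ) / s ^ 2) (𝓝[>] 0) (𝓝 (Q ξ))) :
    Tendsto (fun t => ∫ ξ, rescaledLaplaceIntegrand V z v t ξ) (𝓝[>] 0)
      (𝓝 (∫ ξ, exp (-Q ξ / 2) * v 0 0)) := by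
  have hM : 0 ≤ M := (norm_nonneg _).trans (hvM 0 hV0 0 ⟨le_rfl, zero_le_one⟩)
  have hIoc : Ioc (0 : ℝ) 1 ∈ 𝓝[>] 0 := Ioc_mem_nhdsGT zero_lt_one
  refine tendsto_integral_filter_of_dominated_convergence
    (fun ξ => M * exp (-(c / 2) * ‖ξ‖ ^ 2)) ?_ ?_ ?_ ?_
  · filter_upwards [hIoc] with t ht
    exact aestronglyMeasurable_rescaledLaplaceIntegrand hV hz
      (hv.comp (continuous_id.prodMk continuous_const).continuousOn
        fun u _ => ⟨mem_univ u, Ioc_subset_Icc_self ht⟩)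
  · filter_upwards [hIoc] with t ht
    exact Eventually.of_forall <| norm_rescaledLaplaceIntegrand_le hzV
      (fun x hx => hvM x hx t (Ioc_subset_Icc_self ht)) hM ht.1
  · exact (integrable_exp_neg_mul_sq_norm (by positivity)).const_mul M
  · exact Eventually.of_forall fun ξ => tendsto_rescaledLaplaceIntegrand (hV.mem_nhds hV0)
      (hlim ξ) (hv _ ⟨mem_univ _, left_mem_Icc.2 zero_le_one⟩)

end InnerProductSpace

theorem laplace_method_nondegenerate_minimum_general
    (d : ℕ) (V : Set (EuclideanSpace ℝ (Fin d)))
    (hVopen : IsOpen V) (hVbdd : Bornology.IsBounded V) (hV0 : (0 : EuclideanSpace ℝ (Fin d)) ∈ V)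
    (z : EuclideanSpace ℝ (Fin d) → ℝ)
    (U : Set (EuclideanSpace ℝ (Fin d))) (hUopen : IsOpen U) (hU : closure V ⊆ U)
    (hz : ContDiffOn ℝ 2 z U) (hz0 : z 0 = 0)
    (c : ℝ) (hc : c = sInf {r : ℝ | ∃ x ∈ V, x ≠ 0 ∧ r = z x / ‖x‖ ^ 2}) (hcpos : 0 < c)
    (Q : EuclideanSpace ℝ (Fin d) → ℝ)
    (hQ : ∀ ξ, Q ξ = (1 / 2) * iteratedFDeriv ℝ 2 z 0 ![ξ, ξ])
    (v : EuclideanSpace ℝ (Fin d) → ℝ → ℝ)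
    (hv : ContinuousOn (fun p : EuclideanSpace ℝ (Fin d) × ℝ => v p.1 p.2)
      (univ ×ˢ Icc (0:ℝ) 1)) :
    (∀ ξ, c * ‖ξ‖ ^ 2 ≤ Q ξ) ∧
      Tendsto
        (fun t : ℝ =>
          ∫ u in V, (2 * π * t) ^ (-(d : ℝ) / 2) * Real.exp (-z u / (2 * t)) * v u t)
        (nhdsWithin 0 (Ioi 0))
        (nhds (v 0 0 * (2 * π) ^ (-(d : ℝ) / 2) * ∫ ξ, Real.exp (-Q ξ / 2))) := by
  have hzV : ∀ x ∈ V, c * ‖x‖ ^ 2 ≤ z x := fun x hx =>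
    hc ▸ sInf_div_norm_sq_mul_le hz0 (hc ▸ hcpos.ne') hx
  have hVU : V ⊆ U := subset_closure.trans hU
  have hmin : IsLocalMin z 0 := by
    filter_upwards [hVopen.mem_nhds hV0] with x hx
    exact hz0 ▸ (by positivity : 0 ≤ c * ‖x‖ ^ 2).trans (hzV x hx)
  have hlim : ∀ ξ, Tendsto (fun s : ℝ => z (s • ξ) / s ^ 2) (𝓝[>] 0) (𝓝 (Q ξ)) := fun ξ => by
    simpa [hQ, div_eq_inv_mul] using tendsto_comp_smul_div_sq_of_contDiffAt
      (hz.contDiffAt (hUopen.mem_nhds (hVU hV0))) hz0 hmin.fderiv_eq_zero ξ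
  refine ⟨fun ξ => mul_norm_sq_le_of_tendsto_comp_smul_div_sq
    (Filter.mem_of_superset (hVopen.mem_nhds hV0) hzV) (hlim ξ), ?_⟩
  obtain ⟨M, hM⟩ := (hVbdd.isCompact_closure.prod isCompact_Icc).exists_bound_of_continuousOn
    (hv.mono (prod_mono (subset_univ _) subset_rfl))
  have hrescaled := (tendsto_integral_rescaledLaplaceIntegrand hVopen hV0
    (hz.continuousOn.mono hVU) hcpos hzV hv (fun x hx t ht => hM (x, t) ⟨subset_closure hx, ht⟩)
    hlim).const_mul ((2 * π) ^ (-(d : ℝ) / 2))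
  rw [integral_mul_const, ← mul_assoc, mul_comm _ (v 0 0), ← mul_assoc] at hrescaled
  refine hrescaled.congr' ?_
  filter_upwards [self_mem_nhdsWithin] with t ht
  simpa using (setIntegral_laplace_eq_integral_rescaledLaplaceIntegrand volume
    hVopen.measurableSet z v ht).symm

/-- Laplace-method limit at a non-degenerate minimum: if `z` is `C²` near the closure of a
bounded open neighborhood `V` of `0`, `z(0) = 0`, `c := inf { z(x)/‖x‖² : x ∈ V, x ≠ 0 }`
is positive, and `Q(ξ) := ½ D²z(0)(ξ,ξ)`, then `Q` is positive definite (indeed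
`Q(ξ) ≥ c‖ξ‖²`) and, for continuous `v`,
`∫_V (2πt)^{-d/2} e^{-z(u)/(2t)} v(u,t) du → v(0,0) (2π)^{-d/2} ∫ e^{-Q(ξ)/2} dξ` as
`t → 0⁺`. -/
theorem laplace_method_nondegenerate_minimum
    (d : ℕ) (hd : 1 ≤ d) (V : Set (EuclideanSpace ℝ (Fin d)))
    (hVopen : IsOpen V) (hVbdd : Bornology.IsBounded V) (hV0 : (0 : EuclideanSpace ℝ (Fin d)) ∈ V)
    (z : EuclideanSpace ℝ (Fin d) → ℝ)
    (U : Set (EuclideanSpace ℝ (Fin d))) (hUopen : IsOpen U) (hU : closure V ⊆ U)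
    (hz : ContDiffOn ℝ 2 z U) (hz0 : z 0 = 0)
    (c : ℝ) (hc : c = sInf {r : ℝ | ∃ x ∈ V, x ≠ 0 ∧ r = z x / ‖x‖ ^ 2}) (hcpos : 0 < c)
    (Q : EuclideanSpace ℝ (Fin d) → ℝ)
    (hQ : ∀ ξ, Q ξ = (1 / 2) * iteratedFDeriv ℝ 2 z 0 ![ξ, ξ])
    (v : EuclideanSpace ℝ (Fin d) → ℝ → ℝ)
    (hv : ContinuousOn (fun p : EuclideanSpace ℝ (Fin d) × ℝ => v p.1 p.2)
      (univ ×ˢ Icc (0:ℝ) 1)) :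
    (∀ ξ, c * ‖ξ‖ ^ 2 ≤ Q ξ) ∧
      Tendsto
        (fun t : ℝ =>
          ∫ u in V, (2 * π * t) ^ (-(d : ℝ) / 2) * Real.exp (-z u / (2 * t)) * v u t)
        (nhdsWithin 0 (Ioi 0))
        (nhds (v 0 0 * (2 * π) ^ (-(d : ℝ) / 2) * ∫ ξ, Real.exp (-Q ξ / 2))) :=
  laplace_method_nondegenerate_minimum_general d V hVopen hVbdd hV0 z U hUopen hU hz hz0 c hc hcpos
    Q hQ v hv
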